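/- Let A be a positive conjunctive TABG with states q1,…,qn, let r be a run of A, and let i, j be integers with 1 ≤ j < i ≤ height(r). Then there exists a pump-injection I : (H_i ∪ Ȟ_i ∪ H̊_i) → (H_j ∪ Ȟ_j ∪ H̊_j) if and only if ⟨r_{H_i}, r_{Ȟ_i}⟩ ≤ ⟨r_{H_j}, r_{Ȟ_j}⟩. -/

import Mathlib

set_option maxHeartbeats 1000000

namespace TreeAut

/-! ### Ranked terms -/

/-- Ranked terms over a symbol type `F` (arities are imposed by well-formedness). -/
inductive RTerm (F : Type) : Type
  | node : F → List (RTerm F) → RTerm F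

namespace RTerm

def rootLabel {F : Type} : RTerm F → F
  | .node f _ => f

/-- `SubAt t p s` : the subterm of `t` at position `p` is `s`. -/
inductive SubAt {F : Type} : RTerm F → List ℕ → RTerm F → Prop
  | refl (t : RTerm F) : SubAt t [] t
  | step {f : F} {ts : List (RTerm F)} {i : ℕ} {u s : RTerm F} {p : List ℕ} :
      ts[i]? = some u → SubAt u p s → SubAt (RTerm.node f ts) (i :: p) s

/-- `p` is a position of `t`. -/
def IsPos {F : Type} (t : RTerm F) (p : List ℕ) : Prop := ∃ s, SubAt t p s

/-- `ReplAt t p s t'` : `t'` is the result of replacing in `t` the subterm at `p` by `s`. -/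
inductive ReplAt {F : Type} : RTerm F → List ℕ → RTerm F → RTerm F → Prop
  | here (t s : RTerm F) : ReplAt t [] s s
  | step {f : F} {ts : List (RTerm F)} {i : ℕ} {u u' s : RTerm F} {p : List ℕ} :
      ts[i]? = some u → ReplAt u p s u' →
      ReplAt (RTerm.node f ts) (i :: p) s (RTerm.node f (ts.set i u'))

/-- Height of a term: the maximal length of a position. -/
def height {F : Type} : RTerm F → ℕ
  | .node _ [] => 0
  | .node f (t :: ts) => max (height t + 1) (height (RTerm.node f ts))

/-- Well-formedness of a term with respect to an arity function. -/
inductive WF {F : Type} (ar : F → ℕ) : RTerm F → Prop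
  | node {f : F} {ts : List (RTerm F)} :
      ts.length = ar f → (∀ u ∈ ts, WF ar u) → WF ar (RTerm.node f ts)

/-- A constant, i.e. a term reduced to a symbol (of arity 0). -/
def IsConst {F : Type} (t : RTerm F) : Prop := ∃ c : F, t = RTerm.node c []

/-- Relabeling of a term. -/
def map {F G : Type} (g : F → G) : RTerm F → RTerm G
  | .node f ts => RTerm.node (g f) (ts.attach.map (fun u => map g u.1))
decreasing_by
  simp only [RTerm.node.sizeOf_spec]
  have := List.sizeOf_lt_of_mem u.2
  omega

end RTerm

/-! ### Patterns (terms with variables) and flat equational theories -/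

/-- Terms with variables (variables are natural numbers). -/
inductive Pat (F : Type) : Type
  | var : ℕ → Pat F
  | node : F → List (Pat F) → Pat F

namespace Pat

def subst {F : Type} (σ : ℕ → RTerm F) : Pat F → RTerm F
  | .var v => σ v
  | .node f ps => RTerm.node f (ps.attach.map (fun p => subst σ p.1))
decreasing_by
  simp only [Pat.node.sizeOf_spec]
  have := List.sizeOf_lt_of_mem p.2
  omega

def height {F : Type} : Pat F → ℕ
  | .var _ => 0
  | .node _ [] => 0
  | .node f (p :: ps) => max (height p + 1) (height (Pat.node f ps))

inductive HasVar {F : Type} (v : ℕ) : Pat F → Prop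
  | var : HasVar v (Pat.var v)
  | node {f : F} {ps : List (Pat F)} {p : Pat F} :
      p ∈ ps → HasVar v p → HasVar v (Pat.node f ps)

inductive WF {F : Type} (ar : F → ℕ) : Pat F → Prop
  | var (v : ℕ) : WF ar (Pat.var v)
  | node {f : F} {ps : List (Pat F)} :
      ps.length = ar f → (∀ p ∈ ps, WF ar p) → WF ar (Pat.node f ps)

end Pat

/-- A flat equation: both sides well-formed, of the same height which is at most 1,
and with the same variables. -/
def IsFlatEq {F : Type} (ar : F → ℕ) (e : Pat F × Pat F) : Prop :=
  e.1.WF ar ∧ e.2.WF ar ∧ e.1.height = e.2.height ∧ e.1.height ≤ 1 ∧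
  (∀ v : ℕ, Pat.HasVar v e.1 ↔ Pat.HasVar v e.2)

/-- One rewrite step using an equation of `E` (in either direction) at some position. -/
def Rew {F : Type} (E : List (Pat F × Pat F)) (s t : RTerm F) : Prop :=
  ∃ l r : Pat F, ((l, r) ∈ E ∨ (r, l) ∈ E) ∧
    ∃ (σ : ℕ → RTerm F) (p : List ℕ),
      RTerm.SubAt s p (l.subst σ) ∧ RTerm.ReplAt s p (r.subst σ) t

/-- Equivalence modulo the set of equations `E`. -/
def EqE {F : Type} (E : List (Pat F × Pat F)) : RTerm F → RTerm F → Prop :=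
  Relation.ReflTransGen (Rew E)

/-! ### Global constraints -/

/-- Transition rule of a tree automaton with constraints between brothers:
`sym(args) → res` with brother equalities `bcEq` and disequalities `bcNeq`
(1-based indices of children). -/
structure Rule (F Q : Type) where
  sym : F
  args : List Q
  bcEq : List (ℕ × ℕ)
  bcNeq : List (ℕ × ℕ)
  res : Q

/-- Atomic global constraints: `q ≈ q'`, `q ≉ q'`, and linear inequalities
`Σ c·|q| ≥ a` (type `|.|`) and `Σ c·‖q‖ ≥ a` (type `‖.‖`). -/
inductive GAtom (Q : Type) : Type
  | eq : Q → Q → GAtom Q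
  | neq : Q → Q → GAtom Q
  | cnt : List (ℤ × Q) → ℤ → GAtom Q
  | cls : List (ℤ × Q) → ℤ → GAtom Q

/-- Boolean combinations of atomic global constraints. -/
inductive GC (Q : Type) : Type
  | tt : GC Q
  | ff : GC Q
  | atom : GAtom Q → GC Q
  | and : GC Q → GC Q → GC Q
  | or : GC Q → GC Q → GC Q
  | not : GC Q → GC Q

/-- The set of `=E`-equivalence classes of members of a set of terms. -/
def classesOf {F : Type} (E : List (Pat F × Pat F)) (S : Set (RTerm F)) :
    Set (Set (RTerm F)) :=
  {C | ∃ t ∈ S, C = {u | EqE E t u}}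

section Sat

variable {β F Q : Type}

/-- Positions of a (run) tree where the node has state `q`
(`st` extracts the state of a node label). -/
def stPos (st : β → Q) (r : RTerm β) (q : Q) : Set (List ℕ) :=
  {p | ∃ s, RTerm.SubAt r p s ∧ st s.rootLabel = q}

/-- `⟦|q|⟧` : the number of positions with state `q`. -/
noncomputable def stCount (st : β → Q) (r : RTerm β) (q : Q) : ℕ :=
  (stPos st r q).ncard

/-- Terms occurring below positions with state `q`. -/
def stTerms (st : β → Q) (sy : β → F) (r : RTerm β) (q : Q) : Set (RTerm F) :=
  {t | ∃ p s, RTerm.SubAt r p s ∧ st s.rootLabel = q ∧ s.map sy = t}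

/-- `⟦‖q‖⟧` : the number of `=E`-classes of terms at positions with state `q`. -/
noncomputable def clsCount (E : List (Pat F × Pat F)) (st : β → Q) (sy : β → F)
    (r : RTerm β) (q : Q) : ℕ :=
  (classesOf E (stTerms st sy r q)).ncard

/-- Satisfaction of a global atomic constraint by a run tree. -/
def satAtom (E : List (Pat F × Pat F)) (st : β → Q) (sy : β → F) (r : RTerm β) :
    GAtom Q → Prop
  | .eq q q' => ∀ p p' s s', p ≠ p' → RTerm.SubAt r p s → RTerm.SubAt r p' s' →
      st s.rootLabel = q → st s'.rootLabel = q' → EqE E (s.map sy) (s'.map sy)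
  | .neq q q' => ∀ p p' s s', p ≠ p' → RTerm.SubAt r p s → RTerm.SubAt r p' s' →
      st s.rootLabel = q → st s'.rootLabel = q' → ¬ EqE E (s.map sy) (s'.map sy)
  | .cnt l a => a ≤ (l.map (fun cq => cq.1 * (stCount st r cq.2 : ℤ))).sum
  | .cls l a => a ≤ (l.map (fun cq => cq.1 * (clsCount E st sy r cq.2 : ℤ))).sum

/-- Satisfaction of a global constraint by a run tree. -/
def satGC (E : List (Pat F × Pat F)) (st : β → Q) (sy : β → F) (r : RTerm β) :
    GC Q → Prop
  | .tt => True
  | .ff => False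
  | .atom a => satAtom E st sy r a
  | .and c d => satGC E st sy r c ∧ satGC E st sy r d
  | .or c d => satGC E st sy r c ∨ satGC E st sy r d
  | .not c => ¬ satGC E st sy r c

end Sat

/-! ### Tree automata with global and brother constraints modulo a flat theory -/

/-- A run is represented as a tree labeled by the rules applied at each position. -/
abbrev Run (F Q : Type) := RTerm (Rule F Q)

def Run.state {F Q : Type} (r : Run F Q) : Q := (RTerm.rootLabel r).res
def Run.term {F Q : Type} (r : Run F Q) : RTerm F := r.map Rule.sym

/-- `r` is a structurally correct run using rules of `Δ`, whose local brother
constraints are satisfied modulo `E`. -/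
inductive IsRun {F Q : Type} (Δ : List (Rule F Q)) (E : List (Pat F × Pat F)) :
    Run F Q → Prop
  | node {ρ : Rule F Q} {rs : List (Run F Q)} :
      ρ ∈ Δ →
      ρ.args = rs.map Run.state →
      (∀ r ∈ rs, IsRun Δ E r) →
      (∀ i j ri rj, (i, j) ∈ ρ.bcEq → rs[i - 1]? = some ri →
        rs[j - 1]? = some rj → EqE E ri.term rj.term) →
      (∀ i j ri rj, (i, j) ∈ ρ.bcNeq → rs[i - 1]? = some ri →
        rs[j - 1]? = some rj → ¬ EqE E ri.term rj.term) →
      IsRun Δ E (RTerm.node ρ rs)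

/-- Tree automaton with brother constraints and global constraints modulo a flat theory. -/
structure TABG (F Q : Type) where
  arity : F → ℕ
  stQ : Finset Q
  rules : List (Rule F Q)
  final : List Q
  eqs : List (Pat F × Pat F)
  gc : GC Q

def TABG.IsAccRun {F Q : Type} (A : TABG F Q) (r : Run F Q) : Prop :=
  IsRun A.rules A.eqs r ∧ satGC A.eqs Rule.res Rule.sym r A.gc ∧ r.state ∈ A.final

def TABG.Lang {F Q : Type} (A : TABG F Q) : Set (RTerm F) :=
  {t | ∃ r : Run F Q, A.IsAccRun r ∧ r.term = t}

def Rule.WFr {F Q : Type} (ar : F → ℕ) (S : Finset Q) (ρ : Rule F Q) : Prop :=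
  ρ.args.length = ar ρ.sym ∧ ρ.res ∈ S ∧ (∀ q ∈ ρ.args, q ∈ S) ∧
  (∀ ij ∈ ρ.bcEq, 1 ≤ ij.1 ∧ ij.1 ≤ ρ.args.length ∧ 1 ≤ ij.2 ∧ ij.2 ≤ ρ.args.length) ∧
  (∀ ij ∈ ρ.bcNeq, 1 ≤ ij.1 ∧ ij.1 ≤ ρ.args.length ∧ 1 ≤ ij.2 ∧ ij.2 ≤ ρ.args.length)

/-- Well-formedness of a TABG: the equational theory is flat, the rules respect
the arities and the state set, and final states belong to the state set. -/
def TABG.WF {F Q : Type} (A : TABG F Q) : Prop :=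
  (∀ e ∈ A.eqs, IsFlatEq A.arity e) ∧
  (∀ ρ ∈ A.rules, ρ.WFr A.arity A.stQ) ∧
  (∀ q ∈ A.final, q ∈ A.stQ)

/-! ### Classes of constraints -/

def GAtom.IsEqNeq {Q : Type} : GAtom Q → Prop
  | .eq _ _ => True
  | .neq _ _ => True
  | .cnt _ _ => False
  | .cls _ _ => False

/-- All coefficients and the constant have the same sign. -/
def sameSign (l : List ℤ) (a : ℤ) : Prop :=
  ((∀ c ∈ l, 0 ≤ c) ∧ 0 ≤ a) ∨ ((∀ c ∈ l, c ≤ 0) ∧ a ≤ 0)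

/-- eq/neq atoms and *natural* linear inequalities. -/
def GAtom.IsNat {Q : Type} : GAtom Q → Prop
  | .eq _ _ => True
  | .neq _ _ => True
  | .cnt l a => sameSign (l.map Prod.fst) a
  | .cls l a => sameSign (l.map Prod.fst) a

/-- eq/neq atoms and natural linear inequalities over the `|q|` only. -/
def GAtom.IsNatCnt {Q : Type} : GAtom Q → Prop
  | .eq _ _ => True
  | .neq _ _ => True
  | .cnt l a => sameSign (l.map Prod.fst) a
  | .cls _ _ => False

def GC.AtomsAre {Q : Type} (P : GAtom Q → Prop) : GC Q → Prop
  | .tt => True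
  | .ff => True
  | .atom a => P a
  | .and c d => GC.AtomsAre P c ∧ GC.AtomsAre P d
  | .or c d => GC.AtomsAre P c ∧ GC.AtomsAre P d
  | .not c => GC.AtomsAre P c

/-- Positive conjunctive constraint: a conjunction of atoms. -/
def GC.IsConjAtoms {Q : Type} : GC Q → Prop
  | .tt => True
  | .ff => False
  | .atom _ => True
  | .and c d => GC.IsConjAtoms c ∧ GC.IsConjAtoms d
  | .or _ _ => False
  | .not _ => False

/-- A literal: an atom (with natural arithmetic atoms) or the negation of an
eq/neq atom. -/
def GC.IsLit {Q : Type} : GC Q → Prop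
  | .atom a => GAtom.IsNat a
  | .not (.atom (.eq _ _)) => True
  | .not (.atom (.neq _ _)) => True
  | _ => False

def GC.IsConjLit {Q : Type} : GC Q → Prop
  | .and c d => GC.IsConjLit c ∧ GC.IsConjLit d
  | c => GC.IsLit c

def GC.IsDNF {Q : Type} : GC Q → Prop
  | .or c d => GC.IsDNF c ∧ GC.IsDNF d
  | c => GC.IsConjLit c

/-- Normalized constraint: `true`, `false`, or a disjunction of conjunctions of
literals in which all arithmetic literals are positive. -/
def GC.Normalized {Q : Type} (c : GC Q) : Prop :=
  c = GC.tt ∨ c = GC.ff ∨ GC.IsDNF c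

/-- No reflexive disequality constraints (the TAGED restriction). -/
def GC.NoReflNeq {Q : Type} : GC Q → Prop :=
  GC.AtomsAre (fun a => match a with
    | .neq q q' => q ≠ q'
    | _ => True)

def conjList {Q : Type} : List (GC Q) → GC Q
  | [] => GC.tt
  | [c] => c
  | c :: cs => GC.and c (conjList cs)

def disjList {Q : Type} : List (GC Q) → GC Q
  | [] => GC.ff
  | [c] => c
  | c :: cs => GC.or c (disjList cs)

/-- No local constraints between brothers. -/
def TABG.NoBrother {F Q : Type} (A : TABG F Q) : Prop :=
  ∀ ρ ∈ A.rules, ρ.bcEq = [] ∧ ρ.bcNeq = []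

/-- A TAG: empty equational theory and no brother constraints. -/
def TABG.IsTAG {F Q : Type} (A : TABG F Q) : Prop := A.eqs = [] ∧ A.NoBrother

/-- A plain tree automaton: a TAG with trivial global constraint. -/
def TABG.IsTA {F Q : Type} (A : TABG F Q) : Prop := A.IsTAG ∧ A.gc = GC.tt

/-! ### Synonym states -/

section Syn

variable {F Q : Type} [DecidableEq Q]

/-- Possible replacements of a state occurrence: `q̄` may stay or become `q̂`. -/
def replS (qb qh q : Q) : List Q := if q = qb then [qb, qh] else [q]

/-- Replacement of every occurrence of `|q̄|` (resp. `‖q̄‖`) by `|q̄| + |q̂|`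
(resp. `‖q̄‖ + ‖q̂‖`) in a linear expression. -/
def linRepl (qb qh : Q) (l : List (ℤ × Q)) : List (ℤ × Q) :=
  l.flatMap (fun cq => (replS qb qh cq.2).map (fun q' => (cq.1, q')))

/-- Literal transformation on positive atoms. -/
def synAtom (qb qh : Q) : GAtom Q → GC Q
  | .eq q1 q2 => conjList ((replS qb qh q1).flatMap (fun a =>
      (replS qb qh q2).map (fun b => GC.atom (GAtom.eq a b))))
  | .neq q1 q2 => conjList ((replS qb qh q1).flatMap (fun a =>
      (replS qb qh q2).map (fun b => GC.atom (GAtom.neq a b))))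
  | .cnt l a => GC.atom (GAtom.cnt (linRepl qb qh l) a)
  | .cls l a => GC.atom (GAtom.cls (linRepl qb qh l) a)

/-- The literal transformation `Ĉ` of (a normalized) constraint, for `q̄ ↝ q̂`. -/
def GC.synTrans (qb qh : Q) : GC Q → GC Q
  | .tt => .tt
  | .ff => .ff
  | .atom a => synAtom qb qh a
  | .not (.atom (.eq q1 q2)) => disjList ((replS qb qh q1).flatMap (fun a =>
      (replS qb qh q2).map (fun b => GC.not (GC.atom (GAtom.eq a b)))))
  | .not (.atom (.neq q1 q2)) => disjList ((replS qb qh q1).flatMap (fun a =>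
      (replS qb qh q2).map (fun b => GC.not (GC.atom (GAtom.neq a b)))))
  | .not c => GC.not (GC.synTrans qb qh c)
  | .and c d => GC.and (GC.synTrans qb qh c) (GC.synTrans qb qh d)
  | .or c d => GC.or (GC.synTrans qb qh c) (GC.synTrans qb qh d)

/-- All rules obtained from `ρ` by all possible replacements of occurrences of
`q̄` by `q̂`. -/
def Rule.synVars (qb qh : Q) (ρ : Rule F Q) : List (Rule F Q) :=
  (ρ.args.mapM (replS qb qh)).flatMap (fun args' =>
    (replS qb qh ρ.res).map (fun res' =>
      { sym := ρ.sym, args := args', bcEq := ρ.bcEq, bcNeq := ρ.bcNeq, res := res' }))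

/-- `F_{q̄↝q̂}` on the list of final states. -/
def finSyn (qb qh : Q) (l : List Q) : List Q := if qb ∈ l then qh :: l else l

/-- The constraint `‖q‖ = k`. -/
def clsEqC (q : Q) (k : ℤ) : GC Q :=
  GC.and (GC.atom (GAtom.cls [(1, q)] k)) (GC.atom (GAtom.cls [(-1, q)] (-k)))

/-- The automaton `A_{q̄↝q̂}`. -/
def TABG.synonym (A : TABG F Q) (qb qh : Q) : TABG F Q :=
  { arity := A.arity
    stQ := insert qh A.stQ
    rules := A.rules.flatMap (Rule.synVars qb qh)
    final := finSyn qb qh A.final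
    eqs := A.eqs
    gc := GC.and
      (GC.or (GC.and (clsEqC qb 0) (clsEqC qh 0))
             (GC.and (clsEqC qh 1) (GC.atom (GAtom.neq qb qh))))
      (GC.synTrans qb qh A.gc) }

end Syn

/-! ### Removal of the counting constraints `|q|` : the automaton `A_¬ℕ` -/

def GC.cntAtoms {Q : Type} : GC Q → List (List (ℤ × Q) × ℤ)
  | .atom (.cnt l a) => [(l, a)]
  | .and c d => GC.cntAtoms c ++ GC.cntAtoms d
  | .or c d => GC.cntAtoms c ++ GC.cntAtoms d
  | .not c => GC.cntAtoms c
  | _ => []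

def GC.eqAtoms {Q : Type} : GC Q → List (Q × Q)
  | .atom (.eq q q') => [(q, q')]
  | .and c d => GC.eqAtoms c ++ GC.eqAtoms d
  | .or c d => GC.eqAtoms c ++ GC.eqAtoms d
  | .not c => GC.eqAtoms c
  | _ => []

def GC.neqAtoms {Q : Type} : GC Q → List (Q × Q)
  | .atom (.neq q q') => [(q, q')]
  | .and c d => GC.neqAtoms c ++ GC.neqAtoms d
  | .or c d => GC.neqAtoms c ++ GC.neqAtoms d
  | .not c => GC.neqAtoms c
  | _ => []

/-- `max_A` : one plus the maximal constant occurring in the counting literals. -/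
def GC.maxConst {Q : Type} (c : GC Q) : ℕ :=
  1 + ((c.cntAtoms.map (fun la => la.2.natAbs)).foldr max 0)

/-- Truncated sum of two mappings `Q → {0,…,m}`. -/
def msumF {Q : Type} {m : ℕ} (M1 M2 : Q → Fin (m + 1)) : Q → Fin (m + 1) :=
  fun q => ⟨min ((M1 q : ℕ) + (M2 q : ℕ)) m, Nat.lt_succ_of_le (Nat.min_le_right _ _)⟩

/-- The mapping `M_q`. -/
def unitMap {Q : Type} [DecidableEq Q] (m : ℕ) (q : Q) : Q → Fin (m + 1) :=
  fun q' => if q' = q then ⟨min 1 m, Nat.lt_succ_of_le (Nat.min_le_right _ _)⟩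
            else ⟨0, Nat.succ_pos m⟩

/-- Value of a linear expression under a mapping. -/
def lvalF {Q : Type} {m : ℕ} (M : Q → Fin (m + 1)) (l : List (ℤ × Q)) : ℤ :=
  (l.map (fun cq => cq.1 * ((M cq.2 : ℕ) : ℤ))).sum

/-- All variants of a rule, decorated with occurrence-counting mappings. -/
noncomputable def Rule.notNVars {F Q : Type} [Fintype Q] [DecidableEq Q] (m : ℕ) (ρ : Rule F Q) :
    List (Rule F (Q × (Q → Fin (m + 1)))) :=
  ((ρ.args.mapM (fun q =>
      ((Finset.univ : Finset (Q → Fin (m + 1))).toList).map (fun M => (q, M))))).map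
    (fun args' =>
      { sym := ρ.sym, args := args', bcEq := ρ.bcEq, bcNeq := ρ.bcNeq,
        res := (ρ.res, (args'.map Prod.snd).foldr msumF (unitMap m ρ.res)) })

/-- The automaton `A_¬ℕ`. -/
noncomputable def TABG.notN {F Q : Type} [Fintype Q] [DecidableEq Q] (A : TABG F Q) :
    TABG F (Q × (Q → Fin (A.gc.maxConst + 1))) :=
  { arity := A.arity
    stQ := A.stQ ×ˢ (Finset.univ : Finset (Q → Fin (A.gc.maxConst + 1)))
    rules := A.rules.flatMap (Rule.notNVars A.gc.maxConst)
    final := (A.final.flatMap (fun q =>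
        ((Finset.univ : Finset (Q → Fin (A.gc.maxConst + 1))).toList).map
          (fun M => (q, M)))).filter
        (fun qM => decide (∀ la ∈ A.gc.cntAtoms, la.2 ≤ lvalF qM.2 la.1))
    eqs := A.eqs
    gc := GC.and
      (conjList ((A.gc.eqAtoms).flatMap (fun qq =>
        ((Finset.univ : Finset (Q → Fin (A.gc.maxConst + 1))).toList).flatMap (fun M1 =>
          ((Finset.univ : Finset (Q → Fin (A.gc.maxConst + 1))).toList).map (fun M2 =>
            GC.atom (GAtom.eq (qq.1, M1) (qq.2, M2)))))))
      (conjList ((A.gc.neqAtoms).flatMap (fun qq =>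
        ((Finset.univ : Finset (Q → Fin (A.gc.maxConst + 1))).toList).flatMap (fun M1 =>
          ((Finset.univ : Finset (Q → Fin (A.gc.maxConst + 1))).toList).map (fun M2 =>
            GC.atom (GAtom.neq (qq.1, M1) (qq.2, M2))))))) }

/-! ### Global pumpings -/

section Pump

variable {F Q : Type}

/-- `H_i` : positions of subruns of positive height equal to `i`. -/
def Hset (r : Run F Q) (i : ℕ) : Set (List ℕ) :=
  {p | ∃ s, RTerm.SubAt r p s ∧ 0 < RTerm.height s ∧ RTerm.height s = i}

/-- `Ȟ_i` : positions `p.j` of subruns of positive height `< i` whose parent has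
height `> i`. -/
def Hcheck (r : Run F Q) (i : ℕ) : Set (List ℕ) :=
  {p' | ∃ (p : List ℕ) (j : ℕ) (s s' : Run F Q), p' = p ++ [j] ∧
    RTerm.SubAt r p s ∧ RTerm.SubAt r p' s' ∧
    0 < RTerm.height s' ∧ RTerm.height s' < i ∧ i < RTerm.height s}

/-- `H̊_i` : positions `p.j` of subruns of height `0` (with `0 < i`) whose parent
has height `> i`. -/
def Hring (r : Run F Q) (i : ℕ) : Set (List ℕ) :=
  {p' | ∃ (p : List ℕ) (j : ℕ) (s s' : Run F Q), p' = p ++ [j] ∧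
    RTerm.SubAt r p s ∧ RTerm.SubAt r p' s' ∧
    RTerm.height s' = 0 ∧ 0 < i ∧ i < RTerm.height s}

def Dom (r : Run F Q) (i : ℕ) : Set (List ℕ) := Hset r i ∪ Hcheck r i ∪ Hring r i

/-- A pump-injection `I : (H_i ∪ Ȟ_i ∪ H̊_i) → (H_j ∪ Ȟ_j ∪ H̊_j)`. -/
structure PumpInj (E : List (Pat F × Pat F)) (r : Run F Q) (i j : ℕ)
    (I : List ℕ → List ℕ) : Prop where
  inj : Set.InjOn I (Dom r i)
  mapsH : Set.MapsTo I (Hset r i) (Hset r j)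
  mapsHc : Set.MapsTo I (Hcheck r i) (Hcheck r j)
  mapsHr : Set.MapsTo I (Hring r i) (Hring r j)
  idRing : ∀ p ∈ Hring r i, I p = p
  stPres : ∀ p ∈ Dom r i, ∀ s s', RTerm.SubAt r p s → RTerm.SubAt r (I p) s' →
    Run.state s = Run.state s'
  eqPres : ∀ p1 p2, p1 ∈ Dom r i → p2 ∈ Dom r i →
    ∀ s1 s2 s1' s2', RTerm.SubAt r p1 s1 → RTerm.SubAt r p2 s2 →
      RTerm.SubAt r (I p1) s1' → RTerm.SubAt r (I p2) s2' →
      (EqE E (Run.term s1) (Run.term s2) ↔ EqE E (Run.term s1') (Run.term s2'))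

/-- Simultaneous replacement at all positions of `D` (which are assumed to be
pairwise parallel): at a position of `D` the subtree is replaced by a tree
allowed by `ρ`, elsewhere the tree is kept. -/
inductive MultiRepl {β : Type} (D : Set (List ℕ)) (ρ : List ℕ → RTerm β → Prop) :
    List ℕ → RTerm β → RTerm β → Prop
  | here {p : List ℕ} {t t' : RTerm β} : p ∈ D → ρ p t' → MultiRepl D ρ p t t'
  | node {p : List ℕ} {f : β} {ts ts' : List (RTerm β)} :
      p ∉ D → ts.length = ts'.length →
      (∀ k u u', ts[k]? = some u → ts'[k]? = some u' →
        MultiRepl D ρ (p ++ [k]) u u') →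
      MultiRepl D ρ p (RTerm.node f ts) (RTerm.node f ts')

/-- `r'` is the global pumping on `r` with indexes `i,j` and injection `I`. -/
def IsGlobalPumpingWith (E : List (Pat F × Pat F)) (r : Run F Q) (i j : ℕ)
    (I : List ℕ → List ℕ) (r' : Run F Q) : Prop :=
  PumpInj E r i j I ∧
  MultiRepl (Dom r i) (fun p s => RTerm.SubAt r (I p) s) [] r r'

/-- The `=E`-classes of the subterms at positions of `P`. -/
def classesAt (E : List (Pat F × Pat F)) (r : Run F Q) (P : Set (List ℕ)) :
    Set (Set (RTerm F)) :=
  classesOf E {t | ∃ p ∈ P, ∃ s, RTerm.SubAt r p s ∧ Run.term s = t}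

/-- The tuple `r_{t,P}` of a class `C`, as a function on states. -/
noncomputable def tupleAt (r : Run F Q) (P : Set (List ℕ)) (C : Set (RTerm F))
    (q : Q) : ℕ :=
  {p | p ∈ P ∧ ∃ s, RTerm.SubAt r p s ∧ Run.state s = q ∧ Run.term s ∈ C}.ncard

/-- The multiset ordering `r_P ≤ r_{P'}` : an injection on classes which is
dominating on the associated tuples. -/
def MsetLE (E : List (Pat F × Pat F)) (r : Run F Q) (P P' : Set (List ℕ)) : Prop :=
  ∃ φ : Set (RTerm F) → Set (RTerm F),
    Set.InjOn φ (classesAt E r P) ∧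
    Set.MapsTo φ (classesAt E r P) (classesAt E r P') ∧
    ∀ C ∈ classesAt E r P, ∀ q, tupleAt r P C q ≤ tupleAt r P' (φ C) q

end Pump

/-! ### Multisets of tuples of naturals (for the well quasi-ordering) -/

def TupLE {n : ℕ} (x y : Fin n → ℕ) : Prop := ∀ k, x k ≤ y k

/-- Multiset ordering: an injection mapping each element to a dominating one. -/
def MLE {n : ℕ} (S T : Multiset (Fin n → ℕ)) : Prop :=
  ∃ T' : Multiset (Fin n → ℕ), T' ≤ T ∧ Multiset.Rel TupLE S T'

def msumT {n : ℕ} (S : Multiset (Fin n → ℕ)) : ℕ :=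
  (S.map (fun x => ∑ k, x k)).sum

/-! ### Hedge automata with global constraints, and currying -/

/-- A finite word automaton over the alphabet `Q` (auxiliary states are naturals). -/
structure WordAut (Q : Type) where
  stS : Finset ℕ
  init : ℕ
  final : List ℕ
  trans : List (ℕ × Q × ℕ)

inductive WAccepts {Q : Type} (W : WordAut Q) : ℕ → List Q → Prop
  | nil {s : ℕ} : s ∈ W.final → WAccepts W s []
  | cons {s : ℕ} {q : Q} {s' : ℕ} {w : List Q} :
      (s, q, s') ∈ W.trans → WAccepts W s' w → WAccepts W s (q :: w)

def WordAut.Lang {Q : Type} (W : WordAut Q) (w : List Q) : Prop := WAccepts W W.init w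

/-- Transition rule `a(L) → q` of a hedge automaton. -/
structure HRule (F Q : Type) where
  sym : F
  wa : WordAut Q
  res : Q

/-- Hedge automaton with global constraints, over unranked ordered terms. -/
structure HAG (F Q : Type) where
  stQ : Finset Q
  rules : List (HRule F Q)
  final : List Q
  gc : GC Q

abbrev HRun (F Q : Type) := RTerm (HRule F Q)

def HRun.state {F Q : Type} (r : HRun F Q) : Q := (RTerm.rootLabel r).res
def HRun.term {F Q : Type} (r : HRun F Q) : RTerm F := r.map HRule.sym

inductive IsHRun {F Q : Type} (Δ : List (HRule F Q)) : HRun F Q → Prop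
  | node {ρ : HRule F Q} {rs : List (HRun F Q)} :
      ρ ∈ Δ → ρ.wa.Lang (rs.map HRun.state) →
      (∀ r ∈ rs, IsHRun Δ r) → IsHRun Δ (RTerm.node ρ rs)

def HAG.Lang {F Q : Type} (A : HAG F Q) : Set (RTerm F) :=
  {t | ∃ r : HRun F Q, IsHRun A.rules r ∧
        satGC ([] : List (Pat F × Pat F)) HRule.res HRule.sym r A.gc ∧
        HRun.state r ∈ A.final ∧ HRun.term r = t}

/-- The ranked signature `Σ_@` : symbols of `Σ` become constants, `none` is the
binary symbol `@`. -/
def arAt {F : Type} : Option F → ℕ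
  | none => 2
  | some _ => 0

/-- The `curry` encoding of unranked terms into ranked terms over `Σ_@`. -/
inductive Curried {F : Type} : RTerm F → RTerm (Option F) → Prop
  | base {a : F} : Curried (RTerm.node a []) (RTerm.node (some a) [])
  | step {a : F} {ts : List (RTerm F)} {t : RTerm F} {u v : RTerm (Option F)} :
      Curried (RTerm.node a ts) u → Curried t v →
      Curried (RTerm.node a (ts ++ [t])) (RTerm.node none [u, v])

/-! ### Concrete signatures and languages -/

/-- The signature `{a:0, s:1, f:2}` (resp. `{a:0, g:1, f:2}`): symbol `0` has
arity 0, symbol `1` arity 1, symbol `2` arity 2. -/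
def ar3 : Fin 3 → ℕ := ![0, 1, 2]

/-- `iter1 n` is `s^n(a)` (resp. `g^n(a)`). -/
def iter1 : ℕ → RTerm (Fin 3)
  | 0 => RTerm.node 0 []
  | n + 1 => RTerm.node 1 [iter1 n]

/-- `chain [n1,…,nk] = f(s^{n1}(a), f(s^{n2}(a), …, f(s^{nk}(a), a)…))`. -/
def chain : List ℕ → RTerm (Fin 3)
  | [] => RTerm.node 0 []
  | n :: ns => RTerm.node 2 [iter1 n, chain ns]

/-- The language of chains with pairwise distinct exponents. -/
def LKey : Set (RTerm (Fin 3)) := {t | ∃ ns : List ℕ, ns.Nodup ∧ t = chain ns}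

/-- `bracket [n1,…,nk] = f(g^{n1}(a), f(…, f(g^{n_{k−1}}(a), g^{n_k}(a))…))`. -/
def bracket : List ℕ → RTerm (Fin 3)
  | [] => RTerm.node 0 []
  | [n] => iter1 n
  | n :: ns => RTerm.node 2 [iter1 n, bracket ns]

/-- Every entry has exactly one partner with the same value. -/
def ExactlyOnePartner (ns : List ℕ) : Prop :=
  ∀ i, i < ns.length → ∃! j, j < ns.length ∧ j ≠ i ∧ ns[i]? = ns[j]?

def LDup : Set (RTerm (Fin 3)) :=
  {t | ∃ ns : List ℕ, ns ≠ [] ∧ ExactlyOnePartner ns ∧ t = bracket ns}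

/-! ### Concrete, codable presentations of automata -/

abbrev RuleData := ℕ × List ℕ × List (ℕ × ℕ) × List (ℕ × ℕ) × ℕ
abbrev PatAtomData := ℕ ⊕ ℕ
abbrev FlatSideData := PatAtomData ⊕ (ℕ × List PatAtomData)
abbrev LinData := List (ℤ × ℕ) × ℤ
abbrev GAtomData := (ℕ × ℕ) ⊕ ((ℕ × ℕ) ⊕ (LinData ⊕ LinData))
abbrev GCNodeData := GAtomData ⊕ (ℕ × ℕ × ℕ)
abbrev TABGData :=
  List (ℕ × ℕ) × List RuleData × List ℕ × List (FlatSideData × FlatSideData) ×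
    List GCNodeData

def decodePatAtom : PatAtomData → Pat ℕ
  | Sum.inl v => Pat.var v
  | Sum.inr c => Pat.node c []

def decodeSide : FlatSideData → Pat ℕ
  | Sum.inl a => decodePatAtom a
  | Sum.inr (f, l) => Pat.node f (l.map decodePatAtom)

def decodeGAtom : GAtomData → GAtom ℕ
  | Sum.inl (q, q') => GAtom.eq q q'
  | Sum.inr (Sum.inl (q, q')) => GAtom.neq q q'
  | Sum.inr (Sum.inr (Sum.inl (l, a))) => GAtom.cnt l a
  | Sum.inr (Sum.inr (Sum.inr (l, a))) => GAtom.cls l a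

def decodeGC (nodes : List GCNodeData) : ℕ → ℕ → GC ℕ
  | 0, _ => GC.tt
  | fuel + 1, i =>
    match nodes[i]? with
    | some (Sum.inl a) => GC.atom (decodeGAtom a)
    | some (Sum.inr (op, l, rr)) =>
      if op = 0 then GC.tt
      else if op = 1 then GC.ff
      else if op = 2 then GC.and (decodeGC nodes fuel l) (decodeGC nodes fuel rr)
      else if op = 3 then GC.or (decodeGC nodes fuel l) (decodeGC nodes fuel rr)
      else GC.not (decodeGC nodes fuel l)
    | none => GC.tt

def decodeRule : RuleData → Rule ℕ ℕ
  | (f, args, be, bn, q) => ⟨f, args, be, bn, q⟩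

def decodeArity (sig : List (ℕ × ℕ)) : ℕ → ℕ :=
  fun f => (((sig.find? (fun p => p.1 == f)).map Prod.snd).getD 0)

def dataStates (rules : List RuleData) (final : List ℕ) : Finset ℕ :=
  (rules.flatMap (fun r => r.2.2.2.2 :: r.2.1)).toFinset ∪ final.toFinset

/-- Decoding of a full TABG with arbitrary Boolean global constraint. -/
def decodeTABG (d : TABGData) : TABG ℕ ℕ :=
  { arity := decodeArity d.1
    stQ := dataStates d.2.1 d.2.2.1
    rules := d.2.1.map decodeRule
    final := d.2.2.1
    eqs := d.2.2.2.1.map (fun e => (decodeSide e.1, decodeSide e.2))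
    gc := decodeGC d.2.2.2.2 (d.2.2.2.2).length 0 }

/-- Data for a `TAG^∧[≈]` : signature, rules (no brother constraints), final
states, and a conjunction of equational atoms `q ≈ q'`. -/
abbrev TAGCEData := List (ℕ × ℕ) × List (ℕ × List ℕ × ℕ) × List ℕ × List (ℕ × ℕ)

def decodeTAGCE (d : TAGCEData) : TABG ℕ ℕ :=
  { arity := decodeArity d.1
    stQ := (d.2.1.flatMap (fun r => r.2.2 :: r.2.1)).toFinset ∪ d.2.2.1.toFinset
    rules := d.2.1.map (fun r => ⟨r.1, r.2.1, [], [], r.2.2⟩)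
    final := d.2.2.1
    eqs := []
    gc := conjList (d.2.2.2.map (fun qq => GC.atom (GAtom.eq qq.1 qq.2))) }

/-- Data for a `TAG^∧[≈, |.|_ℤ]` : as above plus a conjunction of integer linear
inequalities. -/
abbrev TAGCZData :=
  List (ℕ × ℕ) × List (ℕ × List ℕ × ℕ) × List ℕ × List (ℕ × ℕ) × List LinData

def decodeTAGCZ (d : TAGCZData) : TABG ℕ ℕ :=
  { arity := decodeArity d.1
    stQ := (d.2.1.flatMap (fun r => r.2.2 :: r.2.1)).toFinset ∪ d.2.2.1.toFinset
    rules := d.2.1.map (fun r => ⟨r.1, r.2.1, [], [], r.2.2⟩)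
    final := d.2.2.1
    eqs := []
    gc := conjList
      (d.2.2.2.1.map (fun qq => GC.atom (GAtom.eq qq.1 qq.2)) ++
       d.2.2.2.2.map (fun la => GC.atom (GAtom.cnt la.1 la.2))) }

/-- A tree language over the ranked signature `ar` is regular if it is the
language of a plain tree automaton. -/
def IsRegular (ar : ℕ → ℕ) (L : Set (RTerm ℕ)) : Prop :=
  ∃ (n : ℕ) (B : TABG ℕ (Fin n)), B.arity = ar ∧ B.WF ∧ B.IsTA ∧ B.Lang = L

/-! ### Automata classes as predicates -/

/-- A TAGED: a TAG whose constraint is a conjunction of atoms `q ≈ q'`, `q ≉ q'`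
without reflexive disequalities. -/
def TAGEDCond {F Q : Type} (A : TABG F Q) : Prop :=
  A.IsTAG ∧ A.gc.IsConjAtoms ∧ A.gc.AtomsAre GAtom.IsEqNeq ∧ A.gc.NoReflNeq

/-- A positive conjunctive TAG with eq/neq atoms (`TAG^∧[≈,≉]`). -/
def TAGCwCond {F Q : Type} (A : TABG F Q) : Prop :=
  A.IsTAG ∧ A.gc.IsConjAtoms ∧ A.gc.AtomsAre GAtom.IsEqNeq

end TreeAut

namespace TreeAut

/-!
On each of its layers `H_i`, `Ȟ_i`, `H̊_i` a pump-injection is an injection of positions that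
preserves states and `=E`-classes of subterms. Between finite sets of positions such an injection
exists iff some injection `φ` of classes gives every class `C` at most as many positions in each
state as `φ C` has, which is `r_P ≤ r_{P'}`: map each (class, state)-fiber injectively into the
corresponding one. A flat theory preserves heights, so subterms from different layers are never
`=E`; hence injections on `H_i` and `Ȟ_i` and the identity on `H̊_i` glue to a pump-injection.
-/

namespace RTerm

variable {β γ : Type} {t t' s s' : RTerm β} {p : List ℕ}

theorem node_induction {P : RTerm β → Prop}
    (h : ∀ f ts, (∀ u ∈ ts, P u) → P (node f ts)) : ∀ t, P t
  | .node f ts => h f ts fun u _ => node_induction h u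

theorem SubAt.unique (h : SubAt t p s) (h' : SubAt t p s') : s = s' := by
  induction h with
  | refl => cases h'; rfl
  | step hu _ ih =>
    cases h' with
    | step hu' hs' => exact ih (Option.some_inj.mp (hu.symm.trans hu') ▸ hs')

theorem finite_setOf_isPos (t : RTerm β) : {p | IsPos t p}.Finite := by
  induction t using node_induction with
  | h f ts ih =>
    refine ((Set.finite_iUnion fun k : Fin ts.length =>
      (ih _ (ts.get_mem k)).image ((k : ℕ) :: ·)).insert []).subset ?_
    rintro _ ⟨s, hs⟩
    cases hs with
    | refl => exact Set.mem_insert _ _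
    | @step _ _ k u _ q hu hq =>
      obtain ⟨hk, rfl⟩ := List.getElem?_eq_some_iff.mp hu
      exact Or.inr (Set.mem_iUnion.mpr ⟨⟨k, hk⟩, q, ⟨s, hq⟩, rfl⟩)

open Classical in
noncomputable def subtermAt (t : RTerm β) (p : List ℕ) : RTerm β :=
  if h : IsPos t p then h.choose else t

theorem subAt_subtermAt (h : IsPos t p) : SubAt t p (t.subtermAt p) := by
  rw [subtermAt, dif_pos h]
  exact h.choose_spec

theorem SubAt.subtermAt_eq (h : SubAt t p s) : t.subtermAt p = s :=
  (subAt_subtermAt ⟨s, h⟩).unique h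

theorem height_node (f : β) (ts : List (RTerm β)) :
    (node f ts).height = (ts.map (·.height + 1)).foldr max 0 := by
  induction ts with
  | nil => simp [height]
  | cons t ts ih => simp only [height, List.map_cons, List.foldr_cons, ih]

theorem height_node_le_succ_iff {f : β} {ts : List (RTerm β)} {n : ℕ} :
    (node f ts).height ≤ n + 1 ↔ ∀ u ∈ ts, u.height ≤ n := by
  induction ts with
  | nil => simp [height]
  | cons t ts ih => simp [height, ih]

theorem one_le_height_node_cons (f : β) (u : RTerm β) (us : List (RTerm β)) :
    1 ≤ (node f (u :: us)).height := by
  simp [height]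

theorem height_map (g : β → γ) (t : RTerm β) : (t.map g).height = t.height := by
  induction t using node_induction with
  | h f ts ih =>
    rw [map, height_node, height_node, List.map_map]
    calc _ = (ts.attach.map fun u => u.1.height + 1).foldr max 0 :=
          congrArg _ (List.map_congr_left fun u _ => by simp [ih u.1 u.2])
      _ = _ := by rw [List.attach_map_val (f := fun u : RTerm β => u.height + 1)]

theorem ReplAt.subAt (h : ReplAt t p s t') : SubAt t' p s := by
  induction h with
  | here => exact .refl _
  | step hu _ ih =>
    refine .step ?_ ih
    rw [List.getElem?_set_self]
    exact (List.getElem?_eq_some_iff.mp hu).1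

theorem ReplAt.undo (h : ReplAt t p s t') (hs : SubAt t p s') : ReplAt t' p s' t := by
  induction h generalizing s' with
  | here => cases hs; exact .here _ _
  | @step f ts k u u' _ _ hu _ ih =>
    cases hs with
    | step hu' hs =>
      obtain rfl := Option.some_inj.mp (hu.symm.trans hu')
      obtain ⟨hk, rfl⟩ := List.getElem?_eq_some_iff.mp hu
      have hstep := ReplAt.step (f := f) (List.getElem?_set_self hk) (ih hs)
      rwa [List.set_set, List.set_getElem_self] at hstep

theorem ReplAt.height_eq (h : ReplAt t p s' t') (hs : SubAt t p s)
    (hh : s'.height = s.height) : t'.height = t.height := by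
  induction h generalizing s with
  | here => cases hs; exact hh
  | @step f ts k u u' _ _ hu _ ih =>
    cases hs with
    | step hu' hs =>
      obtain rfl := Option.some_inj.mp (hu.symm.trans hu')
      obtain ⟨hk, rfl⟩ := List.getElem?_eq_some_iff.mp hu
      rw [height_node, height_node, List.map_set, ih hs hh]
      congr 1
      have := List.set_getElem_self (as := ts.map (·.height + 1)) (by simpa using hk)
      rwa [List.getElem_map] at this

end RTerm

namespace Pat

variable {F : Type} {σ : ℕ → RTerm F} {v w m : ℕ} {f : F} {ps : List (Pat F)} {p : Pat F}

theorem subst_var : (var v : Pat F).subst σ = σ v := by rw [subst]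

theorem subst_node : (node f ps).subst σ = .node f (ps.attach.map fun p => p.1.subst σ) := by
  rw [subst]

theorem hasVar_var_iff : HasVar v (var w : Pat F) ↔ v = w :=
  ⟨by rintro ⟨⟩; rfl, by rintro rfl; exact .var⟩

theorem hasVar_node_iff : HasVar v (node f ps) ↔ ∃ p ∈ ps, HasVar v p :=
  ⟨by rintro (_ | ⟨hp, hv⟩); exact ⟨_, hp, hv⟩, fun ⟨_, hp, hv⟩ => .node hp hv⟩

theorem height_node_le_succ_iff {n : ℕ} :
    (node f ps).height ≤ n + 1 ↔ ∀ p ∈ ps, p.height ≤ n := by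
  induction ps with
  | nil => simp [height]
  | cons p ps ih => simp [height, ih]

theorem height_subst_le_iff_of_height_eq_zero (hp : p.height = 0) :
    (p.subst σ).height ≤ m ↔ ∀ v, HasVar v p → (σ v).height ≤ m := by
  cases p with
  | var w => simp [subst_var, hasVar_var_iff]
  | node c ps =>
    cases ps with
    | nil => simp [subst_node, RTerm.height, hasVar_node_iff]
    | cons q qs => simp [height] at hp

theorem height_subst_le_iff (hp : p.height ≤ 1) :
    (p.subst σ).height ≤ m ↔ p.height ≤ m ∧ ∀ v, HasVar v p → (σ v).height + p.height ≤ m := by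
  rcases Nat.le_one_iff_eq_zero_or_eq_one.mp hp with h0 | h1
  · simp [h0, height_subst_le_iff_of_height_eq_zero h0]
  obtain ⟨f, q, qs, rfl⟩ : ∃ f q qs, p = node f (q :: qs) := by
    rcases p with _ | ⟨f, _ | ⟨q, qs⟩⟩
    · simp [height] at h1
    · simp [height] at h1
    · exact ⟨f, q, qs, rfl⟩
  have hchild : ∀ q' ∈ q :: qs, q'.height = 0 := fun q' hq' =>
    Nat.le_zero.mp (height_node_le_succ_iff.mp hp q' hq')
  rw [h1]
  rcases m with _ | n
  · simp only [nonpos_iff_eq_zero, one_ne_zero, false_and, iff_false]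
    rw [subst_node]
    exact Nat.one_le_iff_ne_zero.mp (RTerm.one_le_height_node_cons ..)
  rw [subst_node, RTerm.height_node_le_succ_iff]
  calc (∀ u ∈ (q :: qs).attach.map (fun p => p.1.subst σ), u.height ≤ n)
      ↔ ∀ q' ∈ q :: qs, (q'.subst σ).height ≤ n := by simp
    _ ↔ ∀ q' ∈ q :: qs, ∀ v, HasVar v q' → (σ v).height ≤ n :=
        forall₂_congr fun q' hq' => height_subst_le_iff_of_height_eq_zero (hchild q' hq')
    _ ↔ _ := by simp only [hasVar_node_iff]; grind

end Pat

section Rewriting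

variable {F : Type} {E : List (Pat F × Pat F)} {s t u : RTerm F}

theorem IsFlatEq.height_subst_eq {ar : F → ℕ} {l r : Pat F} (h : IsFlatEq ar (l, r))
    (σ : ℕ → RTerm F) : (l.subst σ).height = (r.subst σ).height := by
  obtain ⟨-, -, hheight, hle, hvars⟩ := h
  have key : ∀ m, (l.subst σ).height ≤ m ↔ (r.subst σ).height ≤ m := fun m => by
    rw [Pat.height_subst_le_iff hle, Pat.height_subst_le_iff (hheight ▸ hle)]
    simp only [hheight, hvars]
  exact le_antisymm ((key _).2 le_rfl) ((key _).1 le_rfl)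

theorem Rew.symm (h : Rew E s t) : Rew E t s := by
  obtain ⟨l, r, hmem, σ, p, hsub, hrep⟩ := h
  exact ⟨r, l, hmem.symm, σ, p, hrep.subAt, hrep.undo hsub⟩

theorem Rew.height_eq {ar : F → ℕ} (hE : ∀ e ∈ E, IsFlatEq ar e) (h : Rew E s t) :
    t.height = s.height := by
  obtain ⟨l, r, hmem, σ, p, hsub, hrep⟩ := h
  refine hrep.height_eq hsub ?_
  rcases hmem with hmem | hmem
  exacts [((hE _ hmem).height_subst_eq σ).symm, (hE _ hmem).height_subst_eq σ]

theorem EqE.symm (h : EqE E s t) : EqE E t s := by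
  induction h with
  | refl => exact .refl
  | tail _ hst ih => exact .head hst.symm ih

theorem EqE.trans : EqE E s t → EqE E t u → EqE E s u := Relation.ReflTransGen.trans

theorem EqE.height_eq {ar : F → ℕ} (hE : ∀ e ∈ E, IsFlatEq ar e) (h : EqE E s t) :
    t.height = s.height := by
  induction h with
  | refl => rfl
  | tail _ hst ih => rw [hst.height_eq hE, ih]

end Rewriting

section ClassStateInj

open Set

variable {α K S : Type*} (cls : α → K) (st : α → S)

def fiber (P : Set α) (k : K) (q : S) : Set α := {p ∈ P | cls p = k ∧ st p = q}

/-- `r_P ≤ r_{P'}`, where `r_P` is the multiset of the tuples `(|fiber P k q|)_q`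
for `k ∈ cls '' P`. -/
def TupleMsetLE (P P' : Set α) : Prop :=
  ∃ φ : K → K, InjOn φ (cls '' P) ∧ MapsTo φ (cls '' P) (cls '' P') ∧
    ∀ k ∈ cls '' P, ∀ q, (fiber cls st P k q).ncard ≤ (fiber cls st P' (φ k) q).ncard

structure IsClassStateInj (P P' : Set α) (I : α → α) : Prop where
  mapsTo : MapsTo I P P'
  injOn : InjOn I P
  st_eq : ∀ p ∈ P, st (I p) = st p
  cls_eq_iff : ∀ p₁ ∈ P, ∀ p₂ ∈ P, cls (I p₁) = cls (I p₂) ↔ cls p₁ = cls p₂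

variable {cls st} {P P' Q Q' : Set α} {I J : α → α}

theorem exists_mapsTo_injOn_of_ncard_le {s t : Set α} (hs : s.Finite) (ht : t.Finite)
    (h : s.ncard ≤ t.ncard) : ∃ f : α → α, MapsTo f s t ∧ InjOn f s := by
  rcases s.eq_empty_or_nonempty with rfl | ⟨a, -⟩
  · exact ⟨id, mapsTo_empty _ _, injOn_empty _⟩
  have : Nonempty α := ⟨a⟩
  exact hs.exists_injOn_of_encard_le
    (by rwa [← hs.cast_ncard_eq, ← ht.cast_ncard_eq, Nat.cast_le])

theorem TupleMsetLE.exists_isClassStateInj (hP : P.Finite) (hP' : P'.Finite)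
    (h : TupleMsetLE cls st P P') : ∃ I, IsClassStateInj cls st P P' I := by
  obtain ⟨φ, hφinj, hφmaps, hφle⟩ := h
  have hf : ∀ k q, ∃ f : α → α, k ∈ cls '' P →
      MapsTo f (fiber cls st P k q) (fiber cls st P' (φ k) q) ∧ InjOn f (fiber cls st P k q) :=
    fun k q => (em (k ∈ cls '' P)).elim
      (fun hk => (exists_mapsTo_injOn_of_ncard_le (hP.subset (sep_subset _ _))
        (hP'.subset (sep_subset _ _)) (hφle k hk q)).imp fun _ hf _ => hf)
      (fun hk => ⟨id, fun hk' => absurd hk' hk⟩)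
  choose f hf using hf
  have hmem : ∀ p ∈ P, p ∈ fiber cls st P (cls p) (st p) := fun p hp => ⟨hp, rfl, rfl⟩
  have hI : ∀ p ∈ P, f (cls p) (st p) p ∈ fiber cls st P' (φ (cls p)) (st p) :=
    fun p hp => (hf _ _ (mem_image_of_mem cls hp)).1 (hmem p hp)
  have hcls : ∀ p₁ ∈ P, ∀ p₂ ∈ P, cls (f (cls p₁) (st p₁) p₁) = cls (f (cls p₂) (st p₂) p₂) ↔
      cls p₁ = cls p₂ := fun p₁ h₁ p₂ h₂ => by
    rw [(hI p₁ h₁).2.1, (hI p₂ h₂).2.1]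
    exact hφinj.eq_iff (mem_image_of_mem cls h₁) (mem_image_of_mem cls h₂)
  refine ⟨fun p => f (cls p) (st p) p, fun p hp => (hI p hp).1, fun p₁ h₁ p₂ h₂ he => ?_,
    fun p hp => (hI p hp).2.2, hcls⟩
  have hc : cls p₁ = cls p₂ := (hcls p₁ h₁ p₂ h₂).1 (congrArg cls he)
  have hs : st p₁ = st p₂ := by rw [← (hI p₁ h₁).2.2, ← (hI p₂ h₂).2.2]; exact congrArg st he
  refine (hf _ _ (mem_image_of_mem cls h₁)).2 (hmem p₁ h₁) ⟨h₂, hc.symm, hs.symm⟩ ?_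
  simpa only [hc, hs] using he

theorem IsClassStateInj.tupleMsetLE (hP' : P'.Finite) (h : IsClassStateInj cls st P P' I) :
    TupleMsetLE cls st P P' := by
  rcases P.eq_empty_or_nonempty with rfl | ⟨a, -⟩
  · exact ⟨id, by simp, by simp [MapsTo], by simp⟩
  have : Nonempty α := ⟨a⟩
  have hrep : ∀ k ∈ cls '' P,
      Function.invFunOn cls P k ∈ P ∧ cls (Function.invFunOn cls P k) = k :=
    fun k hk => ⟨Function.invFunOn_mem hk, Function.invFunOn_eq hk⟩
  refine ⟨fun k => cls (I (Function.invFunOn cls P k)), fun k₁ h₁ k₂ h₂ he => ?_,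
    fun k hk => mem_image_of_mem cls (h.mapsTo (hrep k hk).1), fun k hk q => ?_⟩
  · rw [← (hrep k₁ h₁).2, ← (hrep k₂ h₂).2]
    exact (h.cls_eq_iff _ (hrep k₁ h₁).1 _ (hrep k₂ h₂).1).1 he
  · refine ncard_le_ncard_of_injOn I
      (fun p ⟨hp, hpk, hq⟩ => ⟨h.mapsTo hp, ?_, (h.st_eq p hp).trans hq⟩)
      (h.injOn.mono (sep_subset _ _)) (hP'.subset (sep_subset _ _))
    exact (h.cls_eq_iff p hp _ (hrep k hk).1).2 (hpk.trans (hrep k hk).2.symm)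

theorem tupleMsetLE_iff_exists_isClassStateInj (hP : P.Finite) (hP' : P'.Finite) :
    TupleMsetLE cls st P P' ↔ ∃ I, IsClassStateInj cls st P P' I :=
  ⟨fun h => h.exists_isClassStateInj hP hP', fun ⟨_, h⟩ => h.tupleMsetLE hP'⟩

theorem isClassStateInj_id (h : P ⊆ P') : IsClassStateInj cls st P P' id :=
  ⟨fun _ hp => h hp, injOn_id P, fun _ _ => rfl, fun _ _ _ _ => Iff.rfl⟩

theorem IsClassStateInj.mono (h : IsClassStateInj cls st P P' I) (hQ : Q ⊆ P)
    (hmaps : MapsTo I Q Q') : IsClassStateInj cls st Q Q' I :=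
  ⟨hmaps, h.injOn.mono hQ, fun p hp => h.st_eq p (hQ hp),
    fun p₁ h₁ p₂ h₂ => h.cls_eq_iff p₁ (hQ h₁) p₂ (hQ h₂)⟩

theorem IsClassStateInj.congr (h : IsClassStateInj cls st P P' I) (hIJ : EqOn I J P) :
    IsClassStateInj cls st P P' J :=
  ⟨h.mapsTo.congr hIJ, h.injOn.congr hIJ, fun p hp => hIJ hp ▸ h.st_eq p hp,
    fun p₁ h₁ p₂ h₂ => hIJ h₁ ▸ hIJ h₂ ▸ h.cls_eq_iff p₁ h₁ p₂ h₂⟩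

theorem IsClassStateInj.union (h₁ : IsClassStateInj cls st P P' I)
    (h₂ : IsClassStateInj cls st Q Q' I) (hPQ : ∀ p ∈ P, ∀ q ∈ Q, cls p ≠ cls q)
    (hPQ' : ∀ p ∈ P', ∀ q ∈ Q', cls p ≠ cls q) :
    IsClassStateInj cls st (P ∪ Q) (P' ∪ Q') I where
  mapsTo := h₁.mapsTo.union_union h₂.mapsTo
  injOn := (injOn_union (disjoint_left.2 fun p hP hQ => hPQ p hP p hQ rfl)).2
    ⟨h₁.injOn, h₂.injOn, fun p hp q hq he =>
      hPQ' _ (h₁.mapsTo hp) _ (h₂.mapsTo hq) (congrArg cls he)⟩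
  st_eq := by
    rintro p (hp | hp)
    exacts [h₁.st_eq p hp, h₂.st_eq p hp]
  cls_eq_iff := by
    rintro p₁ (h₁' | h₁') p₂ (h₂' | h₂')
    · exact h₁.cls_eq_iff p₁ h₁' p₂ h₂'
    · exact iff_of_false (hPQ' _ (h₁.mapsTo h₁') _ (h₂.mapsTo h₂')) (hPQ p₁ h₁' p₂ h₂')
    · exact iff_of_false (fun he => hPQ' _ (h₁.mapsTo h₂') _ (h₂.mapsTo h₁') he.symm)
        (fun he => hPQ p₂ h₂' p₁ h₁' he.symm)
    · exact h₂.cls_eq_iff p₁ h₁' p₂ h₂'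

end ClassStateInj

section Runs

open Set RTerm

variable {F Q : Type} {E : List (Pat F × Pat F)} {r : Run F Q} {P P' : Set (List ℕ)}
  {p p' : List ℕ} {i j n : ℕ}

noncomputable def stateAt (r : Run F Q) (p : List ℕ) : Q := Run.state (r.subtermAt p)

noncomputable def termAt (r : Run F Q) (p : List ℕ) : RTerm F := Run.term (r.subtermAt p)

noncomputable def classAt (E : List (Pat F × Pat F)) (r : Run F Q) (p : List ℕ) :
    Set (RTerm F) :=
  {u | EqE E (termAt r p) u}

theorem classAt_eq_classAt_iff :
    classAt E r p = classAt E r p' ↔ EqE E (termAt r p) (termAt r p') := by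
  refine ⟨fun h => ?_, fun h => Set.ext fun _ => ⟨h.symm.trans, h.trans⟩⟩
  have hp' : termAt r p' ∈ classAt E r p' := Relation.ReflTransGen.refl
  rwa [← h] at hp'

theorem height_eq_of_classAt_eq {ar : F → ℕ} (hE : ∀ e ∈ E, IsFlatEq ar e)
    (h : classAt E r p = classAt E r p') : (r.subtermAt p).height = (r.subtermAt p').height := by
  have := (classAt_eq_classAt_iff.1 h).height_eq hE
  rwa [termAt, termAt, Run.term, Run.term, height_map, height_map, eq_comm] at this

theorem classesAt_eq_image (hP : ∀ p ∈ P, IsPos r p) : classesAt E r P = classAt E r '' P := by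
  ext C
  constructor
  · rintro ⟨_, ⟨p, hp, s, hs, rfl⟩, rfl⟩
    exact ⟨p, hp, by rw [classAt, termAt, hs.subtermAt_eq]⟩
  · rintro ⟨p, hp, rfl⟩
    exact ⟨termAt r p, ⟨p, hp, _, subAt_subtermAt (hP p hp), rfl⟩, rfl⟩

theorem tupleAt_classAt (hP : ∀ p ∈ P, IsPos r p) (p₀ : List ℕ) (q : Q) :
    tupleAt r P (classAt E r p₀) q =
      (fiber (classAt E r) (stateAt r) P (classAt E r p₀) q).ncard := by
  unfold tupleAt
  congr 1
  ext p
  constructor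
  · rintro ⟨hp, s, hs, rfl, hmem⟩
    have hs' := hs.subtermAt_eq
    refine ⟨hp, classAt_eq_classAt_iff.2 ?_, by rw [stateAt, hs']⟩
    rw [termAt, hs']
    exact hmem.symm
  · rintro ⟨hp, hcls, rfl⟩
    exact ⟨hp, _, subAt_subtermAt (hP p hp), rfl, (classAt_eq_classAt_iff.1 hcls).symm⟩

theorem msetLE_iff_tupleMsetLE (hP : ∀ p ∈ P, IsPos r p) (hP' : ∀ p ∈ P', IsPos r p) :
    MsetLE E r P P' ↔ TupleMsetLE (classAt E r) (stateAt r) P P' := by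
  unfold MsetLE TupleMsetLE
  rw [classesAt_eq_image hP, classesAt_eq_image hP']
  refine exists_congr fun φ => and_congr_right fun _ => and_congr_right fun hφ => ?_
  simp only [forall_mem_image]
  refine forall₂_congr fun p hp => forall_congr' fun q => ?_
  obtain ⟨p', -, hp'⟩ := hφ (mem_image_of_mem _ hp)
  rw [tupleAt_classAt hP, ← hp', tupleAt_classAt hP']

theorem msetLE_iff_exists_isClassStateInj (hP : ∀ p ∈ P, IsPos r p)
    (hP' : ∀ p ∈ P', IsPos r p) :
    MsetLE E r P P' ↔ ∃ I, IsClassStateInj (classAt E r) (stateAt r) P P' I :=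
  (msetLE_iff_tupleMsetLE hP hP').trans <| tupleMsetLE_iff_exists_isClassStateInj
    ((finite_setOf_isPos r).subset hP) ((finite_setOf_isPos r).subset hP')

theorem of_mem_Hset (h : p ∈ Hset r n) :
    IsPos r p ∧ 0 < (r.subtermAt p).height ∧ (r.subtermAt p).height = n := by
  obtain ⟨s, hs, h₁, h₂⟩ := h
  rw [hs.subtermAt_eq]
  exact ⟨⟨s, hs⟩, h₁, h₂⟩

theorem of_mem_Hcheck (h : p ∈ Hcheck r n) :
    IsPos r p ∧ 0 < (r.subtermAt p).height ∧ (r.subtermAt p).height < n := by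
  obtain ⟨_, _, _, s, rfl, -, hs, h₁, h₂, -⟩ := h
  rw [hs.subtermAt_eq]
  exact ⟨⟨s, hs⟩, h₁, h₂⟩

theorem of_mem_Hring (h : p ∈ Hring r n) :
    IsPos r p ∧ (r.subtermAt p).height = 0 ∧ 0 < n := by
  obtain ⟨_, _, _, s, rfl, -, hs, h₁, h₂, -⟩ := h
  rw [hs.subtermAt_eq]
  exact ⟨⟨s, hs⟩, h₁, h₂⟩

theorem isPos_of_mem_Dom (h : p ∈ Dom r n) : IsPos r p := by
  rcases h with (h | h) | h
  exacts [(of_mem_Hset h).1, (of_mem_Hcheck h).1, (of_mem_Hring h).1]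

theorem Hring_mono (hj : 0 < j) (hij : j ≤ i) : Hring r i ⊆ Hring r j := by
  rintro _ ⟨p, k, s, s', rfl, hs, hs', h₁, -, h₂⟩
  exact ⟨p, k, s, s', rfl, hs, hs', h₁, hj, hij.trans_lt h₂⟩

theorem classAt_ne_of_mem_Hset_of_mem_Hcheck {ar : F → ℕ} (hE : ∀ e ∈ E, IsFlatEq ar e)
    (hp : p ∈ Hset r n) (hp' : p' ∈ Hcheck r n) : classAt E r p ≠ classAt E r p' := by
  intro h
  have := height_eq_of_classAt_eq hE h
  have := (of_mem_Hset hp).2.2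
  have := (of_mem_Hcheck hp').2.2
  omega

theorem classAt_ne_of_mem_Hring {ar : F → ℕ} (hE : ∀ e ∈ E, IsFlatEq ar e)
    (hp : p ∈ Hset r n ∪ Hcheck r n) (hp' : p' ∈ Hring r n) : classAt E r p ≠ classAt E r p' := by
  intro h
  have := height_eq_of_classAt_eq hE h
  have := (of_mem_Hring hp').2.1
  rcases hp with hp | hp
  · have := (of_mem_Hset hp).2.1
    omega
  · have := (of_mem_Hcheck hp).2.1
    omega

end Runs

section Pumping

open Set RTerm

variable {F Q : Type} {E : List (Pat F × Pat F)} {r : Run F Q} {i j : ℕ} {I : List ℕ → List ℕ}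

theorem pumpInj_iff :
    PumpInj E r i j I ↔
      IsClassStateInj (classAt E r) (stateAt r) (Dom r i) (Dom r j) I ∧
        MapsTo I (Hset r i) (Hset r j) ∧ MapsTo I (Hcheck r i) (Hcheck r j) ∧
        MapsTo I (Hring r i) (Hring r j) ∧ ∀ p ∈ Hring r i, I p = p := by
  constructor
  · intro h
    have hmaps : MapsTo I (Dom r i) (Dom r j) :=
      (h.mapsH.union_union h.mapsHc).union_union h.mapsHr
    have hsub : ∀ p ∈ Dom r i,
        SubAt r p (r.subtermAt p) ∧ SubAt r (I p) (r.subtermAt (I p)) := fun p hp =>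
      ⟨subAt_subtermAt (isPos_of_mem_Dom hp), subAt_subtermAt (isPos_of_mem_Dom (hmaps hp))⟩
    refine ⟨⟨hmaps, h.inj, fun p hp => (h.stPres p hp _ _ (hsub p hp).1 (hsub p hp).2).symm,
      fun p₁ h₁ p₂ h₂ => ?_⟩, h.mapsH, h.mapsHc, h.mapsHr, h.idRing⟩
    rw [classAt_eq_classAt_iff, classAt_eq_classAt_iff]
    exact (h.eqPres p₁ p₂ h₁ h₂ _ _ _ _ (hsub p₁ h₁).1 (hsub p₂ h₂).1 (hsub p₁ h₁).2
      (hsub p₂ h₂).2).symm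
  · rintro ⟨h, hH, hHc, hHr, hid⟩
    refine ⟨h.injOn, hH, hHc, hHr, hid, fun p hp s s' hs hs' => ?_,
      fun p₁ p₂ h₁ h₂ s₁ s₂ s₁' s₂' hs₁ hs₂ hs₁' hs₂' => ?_⟩
    · rw [← hs.subtermAt_eq, ← hs'.subtermAt_eq]
      exact (h.st_eq p hp).symm
    · rw [← hs₁.subtermAt_eq, ← hs₂.subtermAt_eq, ← hs₁'.subtermAt_eq, ← hs₂'.subtermAt_eq]
      exact classAt_eq_classAt_iff.symm.trans
        ((h.cls_eq_iff p₁ h₁ p₂ h₂).symm.trans classAt_eq_classAt_iff)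

theorem exists_pumpInj {ar : F → ℕ} (hE : ∀ e ∈ E, IsFlatEq ar e) (hj : 0 < j) (hij : j ≤ i)
    {I₁ I₂ : List ℕ → List ℕ}
    (h₁ : IsClassStateInj (classAt E r) (stateAt r) (Hset r i) (Hset r j) I₁)
    (h₂ : IsClassStateInj (classAt E r) (stateAt r) (Hcheck r i) (Hcheck r j) I₂) :
    ∃ I, PumpInj E r i j I := by
  classical
  have sep₁ : ∀ n, ∀ p ∈ Hset r n, ∀ p' ∈ Hcheck r n, classAt E r p ≠ classAt E r p' :=
    fun _ _ hp _ hp' => classAt_ne_of_mem_Hset_of_mem_Hcheck hE hp hp'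
  have sep₂ : ∀ n, ∀ p ∈ Hset r n ∪ Hcheck r n, ∀ p' ∈ Hring r n,
      classAt E r p ≠ classAt E r p' :=
    fun _ _ hp _ hp' => classAt_ne_of_mem_Hring hE hp hp'
  set I := (Hset r i ∪ Hcheck r i).piecewise ((Hset r i).piecewise I₁ I₂) id
  have hH : IsClassStateInj (classAt E r) (stateAt r) (Hset r i) (Hset r j) I :=
    h₁.congr fun p hp => ((piecewise_eq_of_mem _ _ _ (mem_union_left _ hp)).trans
      (piecewise_eq_of_mem _ _ _ hp)).symm
  have hHc : IsClassStateInj (classAt E r) (stateAt r) (Hcheck r i) (Hcheck r j) I :=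
    h₂.congr fun p hp => ((piecewise_eq_of_mem _ _ _ (mem_union_right _ hp)).trans
      (piecewise_eq_of_notMem _ _ _ fun h => sep₁ i p h p hp rfl)).symm
  have hid : ∀ p ∈ Hring r i, I p = p := fun p hp =>
    piecewise_eq_of_notMem _ _ _ fun h => sep₂ i p h p hp rfl
  have hHr : IsClassStateInj (classAt E r) (stateAt r) (Hring r i) (Hring r j) I :=
    (isClassStateInj_id (Hring_mono hj hij)).congr fun p hp => (hid p hp).symm
  exact ⟨I, pumpInj_iff.2 ⟨(hH.union hHc (sep₁ i) (sep₁ j)).union hHr (sep₂ i) (sep₂ j),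
    hH.mapsTo, hHc.mapsTo, hHr.mapsTo, hid⟩⟩

end Pumping

theorem pump_injection_iff_multiset_le_general {F Q : Type} (A : TABG F Q)
    (hwf : A.WF)
    (r : Run F Q)
    (i j : ℕ) (hj : 1 ≤ j) (hij : j < i) :
    (∃ I : List ℕ → List ℕ, PumpInj A.eqs r i j I) ↔
      (MsetLE A.eqs r (Hset r i) (Hset r j) ∧
       MsetLE A.eqs r (Hcheck r i) (Hcheck r j)) := by
  have hH := fun n p (hp : p ∈ Hset r n) => (of_mem_Hset hp).1
  have hHc := fun n p (hp : p ∈ Hcheck r n) => (of_mem_Hcheck hp).1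
  rw [msetLE_iff_exists_isClassStateInj (hH i) (hH j),
    msetLE_iff_exists_isClassStateInj (hHc i) (hHc j)]
  constructor
  · rintro ⟨I, hI⟩
    obtain ⟨hDom, hmapsH, hmapsHc, -⟩ := pumpInj_iff.1 hI
    exact ⟨⟨I, hDom.mono (Set.subset_union_left.trans Set.subset_union_left) hmapsH⟩,
      ⟨I, hDom.mono (Set.subset_union_right.trans Set.subset_union_left) hmapsHc⟩⟩
  · rintro ⟨⟨I₁, h₁⟩, ⟨I₂, h₂⟩⟩
    exact exists_pumpInj hwf.1 hj hij.le h₁ h₂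

/-- There exists a pump-injection
`I : (H_i ∪ Ȟ_i ∪ H̊_i) → (H_j ∪ Ȟ_j ∪ H̊_j)` if and only if
`⟨r_{H_i}, r_{Ȟ_i}⟩ ≤ ⟨r_{H_j}, r_{Ȟ_j}⟩` in the ordering on pairs of multisets
of state-indexed tuples. -/
theorem pump_injection_iff_multiset_le {F Q : Type} (A : TABG F Q)
    (hwf : A.WF) (hconj : A.gc.IsConjAtoms) (hatoms : A.gc.AtomsAre GAtom.IsEqNeq)
    (r : Run F Q) (hrun : IsRun A.rules A.eqs r)
    (hsat : satGC A.eqs Rule.res Rule.sym r A.gc)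
    (i j : ℕ) (hj : 1 ≤ j) (hij : j < i) (hi : i ≤ RTerm.height r) :
    (∃ I : List ℕ → List ℕ, PumpInj A.eqs r i j I) ↔
      (MsetLE A.eqs r (Hset r i) (Hset r j) ∧
       MsetLE A.eqs r (Hcheck r i) (Hcheck r j)) :=
  pump_injection_iff_multiset_le_general A hwf r i j hj hij

end TreeAut
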